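/- Let V₀ be a finite-dimensional Euclidean real vector space with complexification V. Define the Paley–Wiener space PW(V) to consist of holomorphic functions f : V → C such that sup_{‖Re λ‖ ≤ k} (1+|λ|)^N |f(λ)| < ∞ for all natural numbers N and k. If f ∈ PW(V), p is a nonzero complex polynomial on V, and f/p extends to a holomorphic function h on V, then h ∈ PW(V). -/

import Mathlib

/-!
Choose a direction `v` on which the top homogeneous component `p_d` of `p` does not vanish. For
every `l`, the restriction `t ↦ p (l + t • v)` is a polynomial of degree `d` with leading
coefficient `p_d v`, independent of `l`. Dividing an entire function of one variable by such a
polynomial costs, by the maximum modulus principle applied root by root on discs of radii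
`3, 9, …, 3 ^ d`, only a constant: `‖p_d v‖ * ‖h l‖ ≤ sup_{‖t‖ ≤ 3 ^ d} ‖f (l + t • v)‖`.
Translating by `t • v` with `‖t‖ ≤ 3 ^ d` widens the tube by a bounded amount and changes
`1 + ‖l‖` by a bounded factor, so the Paley–Wiener estimates of `f` pass to `h`.
-/

noncomputable section

/-- The real parts of the coordinates of a point of `ℂⁿ`. -/
def reOf {n : ℕ} (l : Fin n → ℂ) : Fin n → ℝ := fun i => (l i).re

/-- The Paley–Wiener space: entire functions rapidly decreasing on every tube
`{λ : ‖Re λ‖ ≤ k}`. -/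
def IsPW {n : ℕ} (f : (Fin n → ℂ) → ℂ) : Prop :=
  Differentiable ℂ f ∧ ∀ (N : ℕ) (k : ℝ), ∃ C : ℝ, ∀ l : Fin n → ℂ,
    ‖reOf l‖ ≤ k → (1 + ‖l‖) ^ N * ‖f l‖ ≤ C

open Polynomial Metric

namespace Polynomial

variable {R : Type*} [CommSemiring R]

theorem coeff_prod_sum_of_natDegree_le {ι : Type*} (s : Finset ι) (f : ι → R[X]) (n : ι → ℕ)
    (h : ∀ i ∈ s, (f i).natDegree ≤ n i) :
    (∏ i ∈ s, f i).coeff (∑ i ∈ s, n i) = ∏ i ∈ s, (f i).coeff (n i) := by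
  induction s using Finset.cons_induction with
  | empty => simp
  | cons i s hi ih =>
    have hs : ∀ j ∈ s, (f j).natDegree ≤ n j := fun j hj => h j (Finset.mem_cons_of_mem hj)
    rw [Finset.prod_cons, Finset.sum_cons, Finset.prod_cons,
      coeff_mul_add_eq_of_natDegree_le (h i (Finset.mem_cons_self i s))
        ((natDegree_prod_le _ _).trans (Finset.sum_le_sum hs)), ih hs]

theorem natDegree_C_add_C_mul_X_le (a b : R) : (C a + C b * X).natDegree ≤ 1 := by
  rw [add_comm]
  exact natDegree_linear_le

end Polynomial

namespace MvPolynomial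

variable {σ R : Type*} [CommSemiring R]

def restrictLine (l v : σ → R) : MvPolynomial σ R →ₐ[R] R[X] :=
  aeval fun i => Polynomial.C (l i) + Polynomial.C (v i) * Polynomial.X

variable (l v : σ → R)

theorem eval_restrictLine (p : MvPolynomial σ R) (t : R) :
    (restrictLine l v p).eval t = eval (l + t • v) p := by
  have hline : (fun i => Polynomial.aeval t (Polynomial.C (l i) + Polynomial.C (v i) * Polynomial.X))
      = l + t • v := by
    funext i
    simp only [map_add, map_mul, Polynomial.aeval_C, Polynomial.aeval_X, Pi.add_apply,
      Pi.smul_apply, smul_eq_mul, Algebra.algebraMap_self, RingHom.id_apply, mul_comm]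
  rw [← Polynomial.coe_aeval_eq_eval, restrictLine, comp_aeval_apply, hline]
  rfl

theorem natDegree_restrictLine_le (p : MvPolynomial σ R) :
    (restrictLine l v p).natDegree ≤ p.totalDegree :=
  (aeval_natDegree_le p le_rfl _ fun i => natDegree_C_add_C_mul_X_le (l i) (v i)).trans_eq
    (mul_one _)

theorem coeff_restrictLine_monomial (m : σ →₀ ℕ) (c : R) :
    (restrictLine l v (monomial m c)).coeff m.degree = eval v (monomial m c) := by
  have hpow : ∀ i ∈ m.support,
      ((Polynomial.C (l i) + Polynomial.C (v i) * Polynomial.X) ^ m i).natDegree ≤ m i := fun i _ =>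
    (natDegree_pow_le_of_le _ (natDegree_C_add_C_mul_X_le (l i) (v i))).trans_eq (mul_one _)
  rw [restrictLine, aeval_monomial, eval_monomial, Polynomial.algebraMap_eq,
    Polynomial.coeff_C_mul, Finsupp.prod, Finsupp.degree_apply,
    coeff_prod_sum_of_natDegree_le _ _ _ hpow, Finsupp.prod]
  congr 1
  refine Finset.prod_congr rfl fun i _ => ?_
  simpa using coeff_pow_of_natDegree_le (natDegree_C_add_C_mul_X_le (l i) (v i)) (m := m i)

theorem coeff_restrictLine_of_totalDegree_le (p : MvPolynomial σ R) {n : ℕ}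
    (hn : p.totalDegree ≤ n) :
    (restrictLine l v p).coeff n = eval v (homogeneousComponent n p) := by
  conv_lhs => rw [p.as_sum]
  rw [map_sum, finsetSum_coeff, homogeneousComponent_apply, map_sum, Finset.sum_filter]
  refine Finset.sum_congr rfl fun m hm => ?_
  split_ifs with hmn
  · rw [← hmn, coeff_restrictLine_monomial]
  · have hlt : m.degree < n := lt_of_le_of_ne ((le_totalDegree hm).trans hn) hmn
    exact coeff_eq_zero_of_natDegree_lt
      (((natDegree_restrictLine_le l v _).trans (totalDegree_monomial_le _ _)).trans_lt hlt)

variable {l v} {p : MvPolynomial σ R}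

theorem natDegree_restrictLine (hv : eval v (homogeneousComponent p.totalDegree p) ≠ 0) :
    (restrictLine l v p).natDegree = p.totalDegree :=
  (natDegree_restrictLine_le l v p).antisymm <| le_natDegree_of_ne_zero <| by
    rwa [coeff_restrictLine_of_totalDegree_le l v p le_rfl]

theorem leadingCoeff_restrictLine (hv : eval v (homogeneousComponent p.totalDegree p) ≠ 0) :
    (restrictLine l v p).leadingCoeff = eval v (homogeneousComponent p.totalDegree p) := by
  rw [leadingCoeff, natDegree_restrictLine hv,
    coeff_restrictLine_of_totalDegree_le l v p le_rfl]

theorem homogeneousComponent_totalDegree_ne_zero (hp : p ≠ 0) :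
    homogeneousComponent p.totalDegree p ≠ 0 := by
  obtain ⟨m, hm, hdeg⟩ : ∃ m ∈ p.support, p.totalDegree = m.degree :=
    Finset.exists_mem_eq_sup p.support (support_nonempty.mpr hp) _
  intro h0
  have := congrArg (coeff m) h0
  rw [coeff_homogeneousComponent, if_pos hdeg.symm, coeff_zero] at this
  exact mem_support_iff.mp hm this

theorem exists_eval_homogeneousComponent_totalDegree_ne_zero {R : Type*} [CommRing R]
    [IsDomain R] [Infinite R] {p : MvPolynomial σ R} (hp : p ≠ 0) :
    ∃ v : σ → R, eval v (homogeneousComponent p.totalDegree p) ≠ 0 := by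
  by_contra! h
  exact homogeneousComponent_totalDegree_ne_zero hp (funext fun v => by simp [h v])

end MvPolynomial

/-- If `‖w‖ ≤ 2 * r`, the maximum modulus principle on the disc of radius `3 * r` reduces the
bound to its boundary circle, which stays at distance `≥ r` from `w`; otherwise the disc of
radius `r` itself does. -/
theorem norm_le_div_of_norm_sub_mul_le {G : ℂ → ℂ} (hG : Differentiable ℂ G) (w : ℂ)
    {r M : ℝ} (hr : 0 < r) (hM : ∀ ζ : ℂ, ‖ζ‖ ≤ 3 * r → ‖(ζ - w) * G ζ‖ ≤ M) {z : ℂ}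
    (hz : ‖z‖ ≤ r) : ‖G z‖ ≤ M / r := by
  have far : ∀ ζ : ℂ, ‖ζ‖ ≤ 3 * r → r ≤ ‖ζ - w‖ → ‖G ζ‖ ≤ M / r := fun ζ hζ hw => by
    rw [le_div_iff₀ hr]
    calc ‖G ζ‖ * r ≤ ‖G ζ‖ * ‖ζ - w‖ := by gcongr
      _ = ‖(ζ - w) * G ζ‖ := by rw [norm_mul, mul_comm]
      _ ≤ M := hM ζ hζ
  by_cases hw : ‖w‖ ≤ 2 * r
  · refine Complex.norm_le_of_forall_mem_frontier_norm_le (isBounded_ball (x := 0) (r := 3 * r))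
      hG.diffContOnCl (fun ζ hζ => ?_)
      (by rw [closure_ball _ (by positivity), mem_closedBall_zero_iff]; linarith)
    rw [frontier_ball _ (by positivity), mem_sphere_zero_iff_norm] at hζ
    refine far ζ hζ.le ?_
    calc r ≤ ‖ζ‖ - ‖w‖ := by linarith
      _ ≤ ‖ζ - w‖ := norm_sub_norm_le ζ w
  · refine far z (by linarith) ?_
    calc r ≤ ‖w‖ - ‖z‖ := by linarith
      _ ≤ ‖z - w‖ := by rw [norm_sub_rev]; exact norm_sub_norm_le w z

theorem norm_le_div_pow_of_norm_prod_sub_mul_le (s : Multiset ℂ) {G : ℂ → ℂ}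
    (hG : Differentiable ℂ G) {r M : ℝ} (hr : 0 < r)
    (hM : ∀ ζ : ℂ, ‖ζ‖ ≤ 3 ^ Multiset.card s * r → ‖(s.map (ζ - ·)).prod * G ζ‖ ≤ M)
    {z : ℂ} (hz : ‖z‖ ≤ r) : ‖G z‖ ≤ M / r ^ Multiset.card s := by
  induction s using Multiset.induction generalizing G r M z with
  | empty => simpa using hM z (by simpa using hz)
  | cons w s ih =>
    set k := Multiset.card s
    have hM0 : 0 ≤ M := (norm_nonneg _).trans (hM 0 (by simp; positivity))
    have hwG : ∀ ζ : ℂ, ‖ζ‖ ≤ 3 * r → ‖(ζ - w) * G ζ‖ ≤ M / (3 * r) ^ k := fun ζ hζ =>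
      ih (G := fun ζ => (ζ - w) * G ζ) ((differentiable_id.sub_const w).mul hG) (by positivity)
        (fun ξ hξ => by
          convert hM ξ (by rwa [Multiset.card_cons, pow_succ, mul_assoc]) using 2
          rw [Multiset.map_cons, Multiset.prod_cons]
          ring) hζ
    calc ‖G z‖ ≤ M / (3 * r) ^ k / r := norm_le_div_of_norm_sub_mul_le hG w hr hwG hz
      _ ≤ M / r ^ (k + 1) := by
        rw [div_div, pow_succ]
        gcongr
        linarith
      _ = M / r ^ Multiset.card (w ::ₘ s) := by rw [Multiset.card_cons]

theorem norm_leadingCoeff_mul_le_of_norm_eval_mul_le (q : ℂ[X]) {G : ℂ → ℂ}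
    (hG : Differentiable ℂ G) {r M : ℝ} (hr : 0 < r)
    (hM : ∀ ζ : ℂ, ‖ζ‖ ≤ 3 ^ q.natDegree * r → ‖q.eval ζ * G ζ‖ ≤ M) {z : ℂ}
    (hz : ‖z‖ ≤ r) : ‖q.leadingCoeff‖ * ‖G z‖ ≤ M / r ^ q.natDegree := by
  rw [← norm_mul, ← IsAlgClosed.card_roots_eq_natDegree]
  refine norm_le_div_pow_of_norm_prod_sub_mul_le q.roots (hG.const_mul _) hr (fun ζ hζ => ?_) hz
  rw [← IsAlgClosed.card_roots_eq_natDegree] at hM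
  simpa [(IsAlgClosed.splits q).eval_eq_prod_roots, mul_comm, mul_left_comm, mul_assoc]
    using hM ζ hζ

theorem norm_reOf_le {n : ℕ} (l : Fin n → ℂ) : ‖reOf l‖ ≤ ‖l‖ :=
  (pi_norm_le_iff_of_nonneg (norm_nonneg l)).2 fun i =>
    (Complex.abs_re_le_norm (l i)).trans (norm_le_pi_norm l i)

theorem IsPW.exists_bound_add {n : ℕ} {f : (Fin n → ℂ) → ℂ} (hf : IsPW f) (N : ℕ) (k s : ℝ) :
    ∃ C : ℝ, ∀ l u : Fin n → ℂ, ‖reOf l‖ ≤ k → ‖u‖ ≤ s →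
      (1 + ‖l‖) ^ N * ‖f (l + u)‖ ≤ C := by
  obtain ⟨C, hC⟩ := hf.2 N (k + s)
  refine ⟨C * (1 + s) ^ N, fun l u hl hu => ?_⟩
  have hs : 0 ≤ s := (norm_nonneg u).trans hu
  have hre : ‖reOf (l + u)‖ ≤ k + s :=
    calc ‖reOf (l + u)‖ = ‖reOf l + reOf u‖ := rfl
      _ ≤ ‖reOf l‖ + ‖reOf u‖ := norm_add_le _ _
      _ ≤ k + s := add_le_add hl ((norm_reOf_le u).trans hu)
  have hshift : 1 + ‖l‖ ≤ (1 + ‖l + u‖) * (1 + s) := by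
    have : ‖l‖ ≤ ‖l + u‖ + ‖u‖ := by simpa using norm_sub_le (l + u) u
    nlinarith [norm_nonneg (l + u)]
  calc (1 + ‖l‖) ^ N * ‖f (l + u)‖
      ≤ ((1 + ‖l + u‖) * (1 + s)) ^ N * ‖f (l + u)‖ := by gcongr
    _ = (1 + ‖l + u‖) ^ N * ‖f (l + u)‖ * (1 + s) ^ N := by rw [mul_pow]; ring
    _ ≤ C * (1 + s) ^ N := by gcongr; exact hC _ hre

/-- If `p` divides `f ∈ PW(V)` with holomorphic quotient `h`, then `h ∈ PW(V)`. -/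
theorem pw_polynomial_division (n : ℕ) (f h : (Fin n → ℂ) → ℂ)
    (p : MvPolynomial (Fin n) ℂ) (hp : p ≠ 0) (hf : IsPW f)
    (hh : Differentiable ℂ h)
    (hdiv : ∀ l, f l = MvPolynomial.eval l p * h l) : IsPW h := by
  obtain ⟨v, hv⟩ := MvPolynomial.exists_eval_homogeneousComponent_totalDegree_ne_zero hp
  refine ⟨hh, fun N k => ?_⟩
  obtain ⟨C, hC⟩ := hf.exists_bound_add N k (3 ^ p.totalDegree * ‖v‖)
  refine ⟨C / ‖MvPolynomial.eval v (MvPolynomial.homogeneousComponent p.totalDegree p)‖,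
    fun l hl => ?_⟩
  have hl₀ : 0 < (1 + ‖l‖) ^ N := by positivity
  have key := norm_leadingCoeff_mul_le_of_norm_eval_mul_le (MvPolynomial.restrictLine l v p)
    (G := fun t => h (l + t • v)) (by fun_prop) one_pos (M := C / (1 + ‖l‖) ^ N) ?_ (z := 0)
    (by simp)
  · rw [MvPolynomial.leadingCoeff_restrictLine hv, one_pow, div_one, le_div_iff₀ hl₀] at key
    simp only [zero_smul, add_zero] at key
    rw [le_div_iff₀ (norm_pos_iff.2 hv)]
    linarith
  · intro ζ hζ
    rw [MvPolynomial.natDegree_restrictLine hv, mul_one] at hζ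
    rw [le_div_iff₀ hl₀, MvPolynomial.eval_restrictLine, ← hdiv, mul_comm]
    exact hC l (ζ • v) hl (by rw [norm_smul]; gcongr)
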